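/- arXiv:1408.1269 — 4 statements merged into one kernel-verified Lean document; each statement's English description precedes it below -/
import Mathlib

section
/- Let α be a proper fraction, u a sequence of nonzero scalars, and y any sequence (with y_{-1} = 0). Define x_k = Σ_{i=0}^{k} (-1)^i [Γ(1-α)/(i!·Γ(1-α-i))] (y_{k-i} - y_{k-i-1})/u_{k-i}. Then Σ_{j=0}^{k} u_j (Δ^{(α)}x)_j = y_k for all k. -/
open Finset Filter Topology

/-- Coefficient of the fractional difference operator `Δ^{(α)}`. -/
noncomputable def fracCoeff (α : ℝ) (i : ℕ) : ℝ :=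
  (-1) ^ i * Real.Gamma (α + 1) / ((i.factorial : ℝ) * Real.Gamma (α + 1 - i))

/-- Fractional backward difference operator `Δ^{(α)}` (with `x_m = 0` for `m < 0`). -/
noncomputable def fracDiff (α : ℝ) (x : ℕ → ℝ) (j : ℕ) : ℝ :=
  ∑ i ∈ Finset.range (j + 1), fracCoeff α i * x (j - i)

/-- The `Δ_u^{(α)}(Γ)`-transform of a sequence: `y_k = Σ_{j=0}^k u_j (Δ^{(α)}x)_j`. -/
noncomputable def gammaTransform (α : ℝ) (u x : ℕ → ℝ) (k : ℕ) : ℝ :=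
  ∑ j ∈ Finset.range (k + 1), u j * fracDiff α x j

/-! The coefficients `fracCoeff β i` equal `(-1) ^ i * Ring.choose β i`, the coefficients of
`(1 - X) ^ β`. For non-integral `β`, `Δ^{(β)}` and `Δ^{(-β)}` are therefore multiplication by the
mutually inverse power series `(1 - X) ^ β` and `(1 - X) ^ (-β)`. So `Δ^{(α)} x` is the sequence
`(y_j - y_{j-1}) / u_j`, and the weighted sum `Σ u_j (Δ^{(α)} x)_j` telescopes to `y_k`. -/

open PowerSeries

lemma Real.Gamma_add_one_eq_descPochhammer_mul {β : ℝ} (hβ : ∀ n : ℕ, β ≠ n) (i : ℕ) :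
    Real.Gamma (β + 1) = (descPochhammer ℝ i).eval β * Real.Gamma (β + 1 - i) := by
  induction i with
  | zero => simp
  | succ i ih =>
    have hβi : β - i ≠ 0 := sub_ne_zero.mpr (hβ i)
    rw [ih, descPochhammer_succ_eval, mul_assoc, Nat.cast_succ, add_sub_add_right_eq_sub,
      ← Real.Gamma_add_one hβi, sub_add_eq_add_sub]

lemma fracCoeff_eq_neg_one_pow_mul_choose {β : ℝ} (hβ : ∀ n : ℤ, β ≠ n) (i : ℕ) :
    fracCoeff β i = (-1) ^ i * Ring.choose β i := by
  have hΓ : Real.Gamma (β + 1) ≠ 0 :=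
    Real.Gamma_ne_zero fun m h => hβ (-m - 1) (by push_cast; linarith)
  have hdesc := Real.Gamma_add_one_eq_descPochhammer_mul (fun n => by exact_mod_cast hβ n) i
  have hΓi : Real.Gamma (β + 1 - i) ≠ 0 := right_ne_zero_of_mul (hdesc ▸ hΓ)
  rw [fracCoeff, Ring.choose_eq_smul, smul_eq_mul, ← Polynomial.aeval_eq_smeval,
    Polynomial.aeval_def, Polynomial.eval₂_eq_eval_map, descPochhammer_map, hdesc]
  field_simp

lemma mk_fracCoeff_eq_rescale_binomialSeries {β : ℝ} (hβ : ∀ n : ℤ, β ≠ n) :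
    mk (fracCoeff β) = rescale (-1) (binomialSeries ℝ β) := by
  ext i
  simp [fracCoeff_eq_neg_one_pow_mul_choose hβ, coeff_rescale]

lemma mk_fracCoeff_mul_mk_fracCoeff_neg {β : ℝ} (hβ : ∀ n : ℤ, β ≠ n) :
    mk (fracCoeff β) * mk (fracCoeff (-β)) = 1 := by
  have hβ' : ∀ n : ℤ, -β ≠ n := fun n h => hβ (-n) (by push_cast; linarith)
  rw [mk_fracCoeff_eq_rescale_binomialSeries hβ, mk_fracCoeff_eq_rescale_binomialSeries hβ',
    ← map_mul, ← binomialSeries_add, add_neg_cancel, binomialSeries_zero, map_one]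

lemma fracDiff_eq_coeff_mul (β : ℝ) (x : ℕ → ℝ) (j : ℕ) :
    fracDiff β x j = coeff j (mk (fracCoeff β) * mk x) := by
  rw [fracDiff, coeff_mul, Finset.Nat.sum_antidiagonal_eq_sum_range_succ_mk]
  simp

lemma fracDiff_fracDiff_neg {β : ℝ} (hβ : ∀ n : ℤ, β ≠ n) (x : ℕ → ℝ) :
    fracDiff β (fracDiff (-β) x) = x := by
  have hmk : mk (fracDiff (-β) x) = mk (fracCoeff (-β)) * mk x := by
    ext j; rw [coeff_mk, fracDiff_eq_coeff_mul]
  ext j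
  rw [fracDiff_eq_coeff_mul, hmk, ← mul_assoc, mk_fracCoeff_mul_mk_fracCoeff_neg hβ, one_mul,
    coeff_mk]

lemma Finset.sum_range_sub_prev {M : Type*} [AddCommGroup M] (y : ℕ → M) (k : ℕ) :
    ∑ j ∈ range (k + 1), (y j - if j = 0 then 0 else y (j - 1)) = y k := by
  induction k with
  | zero => simp
  | succ k ih => rw [sum_range_succ, ih]; simp

theorem gamma_transform_inverse (α : ℝ) (hα : 0 < α) (hα1 : α < 1)
    (u : ℕ → ℝ) (hu : ∀ k, u k ≠ 0) (y : ℕ → ℝ)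
    (x : ℕ → ℝ)
    (hx : ∀ k, x k = ∑ i ∈ Finset.range (k + 1),
      fracCoeff (-α) i * ((y (k - i) - if k - i = 0 then 0 else y (k - i - 1)) / u (k - i))) :
    ∀ k, gammaTransform α u x k = y k := by
  have hαℤ : ∀ n : ℤ, α ≠ n := by
    rintro n rfl
    have h0 : (0 : ℤ) < n := by exact_mod_cast hα
    have h1 : n < 1 := by exact_mod_cast hα1
    omega
  set d : ℕ → ℝ := fun m => (y m - if m = 0 then 0 else y (m - 1)) / u m
  have hxd : x = fracDiff (-α) d := funext hx
  intro k
  calc gammaTransform α u x k = ∑ j ∈ range (k + 1), u j * d j := by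
        rw [gammaTransform, hxd, fracDiff_fracDiff_neg hαℤ]
    _ = y k := by
        simp_rw [d, mul_div_cancel₀ _ (hu _)]
        exact sum_range_sub_prev y k
end

section
/- An infinite matrix A = (a_{nk}) maps c₀ into c (i.e., for every null sequence x, the series (Ax)_n = Σ_k a_{nk} x_k all converge and the sequence (Ax)_n converges) if and only if: (i) lim_{n→∞} a_{nk} exists for each fixed k, and (ii) sup__n Σ_k |a_{nk}| < ∞. -/
/-!
Each row `a` of `A` gives a functional `f ↦ ∑ₖ aₖ fₖ` on the Banach space `c₀ = C₀(ℕ, ℝ)`.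
Testing a functional `φ` on `∑_{k<K} sign (φ eₖ) • eₖ`, a vector of norm at most one, gives
`∑ₖ |φ eₖ| ≤ ‖φ‖`. If `A` maps `c₀` into `c`, the row functionals are pointwise bounded, so
the uniform boundedness principle bounds their norms and hence the row sums `∑ₖ |aₙₖ|`, while
evaluating at `eₖ` gives the convergence of the columns. Conversely, bounded row sums make the
row functionals equicontinuous, and they converge on the finitely supported sequences, which
are dense in `c₀`.
-/

open Filter Topology ZeroAtInfty Finset

noncomputable section

namespace ZeroAtInftyContinuousMap

section General

variable {α β : Type*} [TopologicalSpace α] [SeminormedAddCommGroup β]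

theorem norm_apply_le_norm (f : C₀(α, β)) (x : α) : ‖f x‖ ≤ ‖f‖ :=
  norm_toBCF_eq_norm (f := f) ▸ f.toBCF.norm_coe_le_norm x

theorem norm_le {f : C₀(α, β)} {C : ℝ} (hC : 0 ≤ C) : ‖f‖ ≤ C ↔ ∀ x, ‖f x‖ ≤ C := by
  rw [← norm_toBCF_eq_norm]
  exact BoundedContinuousFunction.norm_le hC

variable (𝕜 : Type*) [NontriviallyNormedField 𝕜] [NormedSpace 𝕜 β]

def evalCLM (x : α) : C₀(α, β) →L[𝕜] β :=
  LinearMap.mkContinuous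
    { toFun f := f x
      map_add' _ _ := rfl
      map_smul' _ _ := rfl }
    1 fun f => by simpa using norm_apply_le_norm f x

@[simp]
theorem evalCLM_apply (x : α) (f : C₀(α, β)) : evalCLM 𝕜 x f = f x := rfl

end General

def ofTendsto (x : ℕ → ℝ) (hx : Tendsto x atTop (𝓝 0)) : C₀(ℕ, ℝ) where
  toFun := x
  continuous_toFun := continuous_of_discreteTopology
  zero_at_infty' := by rwa [cocompact_eq_atTop]

theorem tendsto_atTop_zero (f : C₀(ℕ, ℝ)) : Tendsto f atTop (𝓝 0) := by
  simpa [cocompact_eq_atTop] using f.zero_at_infty'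

def single (k : ℕ) : C₀(ℕ, ℝ) :=
  ofTendsto (Pi.single k 1) <| tendsto_const_nhds.congr' <| by
    filter_upwards [eventually_gt_atTop k] with j hj
    simp [hj.ne']

@[simp]
theorem coe_single (k : ℕ) : ⇑(single k) = Pi.single k 1 := rfl

theorem sum_smul_single_apply (c : ℕ → ℝ) (s : Finset ℕ) (j : ℕ) :
    (∑ k ∈ s, c k • single k) j = if j ∈ s then c j else 0 := by
  rw [← evalCLM_apply ℝ, map_sum]
  simp [Pi.single_apply]

theorem sum_range_abs_apply_single_le_opNorm (φ : C₀(ℕ, ℝ) →L[ℝ] ℝ) (K : ℕ) :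
    ∑ k ∈ range K, |φ (single k)| ≤ ‖φ‖ := by
  set t := ∑ k ∈ range K, (SignType.sign (φ (single k)) : ℝ) • single k
  have ht : ‖t‖ ≤ 1 := (norm_le zero_le_one).2 fun j => by
    rw [sum_smul_single_apply]
    split_ifs
    · rcases SignType.sign (φ (single j)) with _ | _ | _ <;> norm_num
    · simp
  calc ∑ k ∈ range K, |φ (single k)| = φ t := by simp [t, mul_comm, self_mul_sign]
    _ ≤ ‖φ t‖ := le_abs_self _
    _ ≤ ‖φ‖ * ‖t‖ := φ.le_opNorm t
    _ ≤ ‖φ‖ := mul_le_of_le_one_right (norm_nonneg φ) ht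

theorem tendsto_sum_smul_single (f : C₀(ℕ, ℝ)) :
    Tendsto (fun K => ∑ k ∈ range K, f k • single k) atTop (𝓝 f) := by
  refine Metric.tendsto_atTop.2 fun ε hε => ?_
  obtain ⟨N, hN⟩ := Metric.tendsto_atTop.1 f.tendsto_atTop_zero (ε / 2) (half_pos hε)
  refine ⟨N, fun K hK => lt_of_le_of_lt ?_ (half_lt_self hε)⟩
  rw [dist_eq_norm]
  refine (norm_le (half_pos hε).le).2 fun j => ?_
  rw [coe_sub, Pi.sub_apply, sum_smul_single_apply]
  split_ifs with hj
  · simp [(half_pos hε).le]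
  · simpa using (hN j (hK.trans (by simpa using hj))).le

theorem tendsto_apply_of_tendsto_apply_single {ι : Type*} {l : Filter ι}
    {φ : ι → C₀(ℕ, ℝ) →L[ℝ] ℝ} {ψ : C₀(ℕ, ℝ) →L[ℝ] ℝ} {C : ℝ} (hφ : ∀ i, ‖φ i‖ ≤ C)
    (h : ∀ k, Tendsto (fun i => φ i (single k)) l (𝓝 (ψ (single k)))) (f : C₀(ℕ, ℝ)) :
    Tendsto (fun i => φ i f) l (𝓝 (ψ f)) := by
  have hequi : Equicontinuous ((↑) ∘ φ) :=
    ((NormedSpace.equicontinuous_TFAE φ).out 1 5).2 (⟨C, hφ⟩ : ∃ C, ∀ i, ‖φ i‖ ≤ C)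
  refine (hequi f).tendsto_of_mem_closure (ψ.continuous.continuousAt.mono_left nhdsWithin_le_nhds)
    (s := Set.range fun K => ∑ k ∈ range K, f k • single k) ?_
    (mem_closure_of_tendsto (tendsto_sum_smul_single f) (Eventually.of_forall fun K => ⟨K, rfl⟩))
  rintro _ ⟨K, rfl⟩
  simpa only [Function.comp_apply, map_sum, map_smul, smul_eq_mul] using
    tendsto_finsetSum _ fun k _ => (h k).const_mul (f k)

def partialSumCLM (a : ℕ → ℝ) (K : ℕ) : C₀(ℕ, ℝ) →L[ℝ] ℝ :=
  ∑ k ∈ range K, a k • evalCLM ℝ k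

theorem partialSumCLM_apply (a : ℕ → ℝ) (K : ℕ) (f : C₀(ℕ, ℝ)) :
    partialSumCLM a K f = ∑ k ∈ range K, a k * f k := by
  simp [partialSumCLM]

/-- Continuous by Banach–Steinhaus as the pointwise limit of its partial sums, so it exists
before `∑ₖ |aₖ| < ∞` is known. -/
def tsumCLM (a : ℕ → ℝ) (ha : ∀ f : C₀(ℕ, ℝ), Summable fun k => a k * f k) :
    C₀(ℕ, ℝ) →L[ℝ] ℝ :=
  continuousLinearMapOfTendsto (partialSumCLM a) <| tendsto_pi_nhds.2 fun f => by
    simpa only [partialSumCLM_apply] using (ha f).hasSum.tendsto_sum_nat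

theorem tsumCLM_apply (a : ℕ → ℝ) (ha : ∀ f : C₀(ℕ, ℝ), Summable fun k => a k * f k)
    (f : C₀(ℕ, ℝ)) : tsumCLM a ha f = ∑' k, a k * f k := rfl

theorem tsumCLM_single (a : ℕ → ℝ) (ha : ∀ f : C₀(ℕ, ℝ), Summable fun k => a k * f k) (k : ℕ) :
    tsumCLM a ha (single k) = a k := by
  rw [tsumCLM_apply, tsum_eq_single k fun j hj => by simp [hj]]
  simp

theorem summable_mul_of_summable_abs {a : ℕ → ℝ} (ha : Summable fun k => |a k|)
    (f : C₀(ℕ, ℝ)) : Summable fun k => a k * f k :=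
  .of_norm_bounded (ha.mul_right ‖f‖) fun k => by
    simpa [abs_mul] using mul_le_mul_of_nonneg_left (norm_apply_le_norm f k) (abs_nonneg (a k))

theorem opNorm_tsumCLM_le {a : ℕ → ℝ} (ha : Summable fun k => |a k|) :
    ‖tsumCLM a (summable_mul_of_summable_abs ha)‖ ≤ ∑' k, |a k| :=
  ContinuousLinearMap.opNorm_le_bound _ (tsum_nonneg fun k => abs_nonneg _) fun f =>
    tsum_of_norm_bounded (ha.hasSum.mul_right ‖f‖) fun k => by
      simpa [abs_mul, tsum_mul_right] using
        mul_le_mul_of_nonneg_left (norm_apply_le_norm f k) (abs_nonneg (a k))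

end ZeroAtInftyContinuousMap

theorem summable_and_tsum_le_iff_forall_sum_range_le {f : ℕ → ℝ} (hf : ∀ k, 0 ≤ f k) {C : ℝ} :
    (Summable f ∧ ∑' k, f k ≤ C) ↔ ∀ K, ∑ k ∈ range K, f k ≤ C :=
  ⟨fun ⟨hs, hle⟩ _ => (hs.sum_le_tsum _ fun k _ => hf k).trans hle,
    fun h => ⟨summable_of_sum_range_le hf h, Real.tsum_le_of_sum_range_le hf h⟩⟩

theorem summable_abs_of_tendsto {a : ℕ → ℕ → ℝ} {l : ℕ → ℝ} {C : ℝ}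
    (hl : ∀ k, Tendsto (fun n => a n k) atTop (𝓝 (l k)))
    (hC : ∀ n, (Summable fun k => |a n k|) ∧ ∑' k, |a n k| ≤ C) :
    Summable fun k => |l k| :=
  ((summable_and_tsum_le_iff_forall_sum_range_le fun k => abs_nonneg (l k)).2 fun K =>
    le_of_tendsto' (tendsto_finsetSum _ fun k _ => (hl k).abs) fun n =>
      (summable_and_tsum_le_iff_forall_sum_range_le fun _ => abs_nonneg _).1 (hC n) K).1

end

open ZeroAtInftyContinuousMap

/-- A matrix maps `c₀` into `c` iff the columns converge and the rows have
uniformly bounded `ℓ₁`-norms. -/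
theorem matrix_c0_to_c (A : ℕ → ℕ → ℝ) :
    (∀ x : ℕ → ℝ, Tendsto x atTop (𝓝 0) →
      (∀ n, Summable (fun k => A n k * x k)) ∧
      ∃ L, Tendsto (fun n => ∑' k, A n k * x k) atTop (𝓝 L)) ↔
    ((∀ k, ∃ l, Tendsto (fun n => A n k) atTop (𝓝 l)) ∧
      ∃ C : ℝ, ∀ n, (Summable fun k => |A n k|) ∧ ∑' k, |A n k| ≤ C) := by
  constructor
  · intro h
    have hrow (n : ℕ) (f : C₀(ℕ, ℝ)) : Summable fun k => A n k * f k :=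
      (h f f.tendsto_atTop_zero).1 n
    let φ n := tsumCLM (A n) (hrow n)
    have hconv (f : C₀(ℕ, ℝ)) : ∃ L, Tendsto (fun n => φ n f) atTop (𝓝 L) :=
      (h f f.tendsto_atTop_zero).2
    have hbdd (f : C₀(ℕ, ℝ)) : ∃ C, ∀ n, ‖φ n f‖ ≤ C := by
      obtain ⟨L, hL⟩ := hconv f
      obtain ⟨C, hC⟩ := hL.norm.bddAbove_range
      exact ⟨C, fun n => hC ⟨n, rfl⟩⟩
    obtain ⟨C, hC⟩ := banach_steinhaus hbdd
    refine ⟨fun k => by simpa only [φ, tsumCLM_single] using hconv (single k), C, fun n => ?_⟩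
    refine (summable_and_tsum_le_iff_forall_sum_range_le fun k => abs_nonneg _).2 fun K => ?_
    simpa only [φ, tsumCLM_single] using
      (sum_range_abs_apply_single_le_opNorm (φ n) K).trans (hC n)
  · rintro ⟨hcol, C, hC⟩ x hx
    choose l hl using hcol
    have hl_summable := summable_abs_of_tendsto hl hC
    let φ n := tsumCLM (A n) (summable_mul_of_summable_abs (hC n).1)
    let ψ := tsumCLM l (summable_mul_of_summable_abs hl_summable)
    refine ⟨fun n => summable_mul_of_summable_abs (hC n).1 (ofTendsto x hx), ψ (ofTendsto x hx), ?_⟩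
    have hφ (n : ℕ) : ‖φ n‖ ≤ C := (opNorm_tsumCLM_le (hC n).1).trans (hC n).2
    refine tendsto_apply_of_tendsto_apply_single hφ (fun k => ?_) (ofTendsto x hx)
    simpa only [φ, ψ, tsumCLM_single] using hl k
end

section
/- An infinite matrix A = (a_{nk}) maps c into c if and only if: (i) lim_{n→∞} a_{nk} = α_k exists for each fixed k, (ii) sup_n Σ_k |a_{nk}| < ∞, and (iii) lim_{n→∞} Σ_k a_{nk} exists. -/
/-!
Sufficiency: after subtracting the limit of `x` it suffices to treat a null sequence `y`. The
sections `∑_{k<K} a_{nk} y_k` approximate `∑_k a_{nk} y_k` uniformly in `n`, because the rows are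
bounded in `ℓ¹` and `y` is small beyond `K`; each section converges as `n → ∞` by (i), so the
limits may be interchanged.

Necessity: unit vectors and the constant sequence `1` give (i) and (iii). A row in `ℓ¹` is a
bounded functional on `c₀` whose norm is its `ℓ¹`-norm (test against truncated sign vectors), so
the uniform boundedness principle gives (ii); applied to the finite sections of a single row, it
shows that the row is in `ℓ¹` in the first place.
-/

open Filter Topology Finset ZeroAtInfty

theorem Summable.mul_of_tendsto {a x : ℕ → ℝ} {l : ℝ} (ha : Summable fun k => |a k|)
    (hx : Tendsto x atTop (𝓝 l)) : Summable fun k => a k * x k := by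
  obtain ⟨M, hM⟩ := hx.abs.bddAbove_range
  refine (ha.mul_right M).of_norm_bounded fun k => ?_
  rw [Real.norm_eq_abs, abs_mul]
  exact mul_le_mul_of_nonneg_left (hM ⟨k, rfl⟩) (abs_nonneg _)

theorem tsum_ite_lt (f : ℕ → ℝ) (K : ℕ) :
    ∑' k, (if k < K then f k else 0) = ∑ k ∈ range K, f k := by
  rw [tsum_eq_sum (s := range K) fun k hk => if_neg (by simpa using hk)]
  exact sum_congr rfl fun k hk => if_pos (mem_range.1 hk)

theorem abs_tsum_mul_sub_sum_range_le {a y : ℕ → ℝ} (ha : Summable fun k => |a k|) {K : ℕ}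
    {δ : ℝ} (hy : ∀ k ≥ K, |y k| ≤ δ) :
    |∑' k, a k * y k - ∑ k ∈ range K, a k * y k| ≤ (∑' k, |a k|) * δ := by
  have hδ : 0 ≤ δ := (abs_nonneg _).trans (hy K le_rfl)
  have hshift : Summable fun k => |a (k + K)| := (summable_nat_add_iff K).2 ha
  have hbound : ∀ k, ‖a (k + K) * y (k + K)‖ ≤ |a (k + K)| * δ := fun k => by
    rw [Real.norm_eq_abs, abs_mul]
    exact mul_le_mul_of_nonneg_left (hy _ (Nat.le_add_left K k)) (abs_nonneg _)
  have hsum : Summable fun k => a k * y k :=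
    (summable_nat_add_iff K).1 ((hshift.mul_right δ).of_norm_bounded hbound)
  rw [← hsum.sum_add_tsum_nat_add K, add_sub_cancel_left]
  calc |∑' k, a (k + K) * y (k + K)| ≤ (∑' k, |a (k + K)|) * δ :=
        tsum_of_norm_bounded (hshift.hasSum.mul_right δ) hbound
    _ ≤ (∑' k, |a k|) * δ := mul_le_mul_of_nonneg_right
        (tsum_comp_le_tsum_of_inj ha (fun _ => abs_nonneg _) (add_left_injective K)) hδ

theorem ZeroAtInftyContinuousMap.tendsto_atTop_nat (x : C₀(ℕ, ℝ)) :
    Tendsto x atTop (𝓝 0) :=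
  cocompact_eq_atTop (α := ℕ) ▸ x.zero_at_infty'

theorem ZeroAtInftyContinuousMap.abs_apply_le_norm (x : C₀(ℕ, ℝ)) (k : ℕ) : |x k| ≤ ‖x‖ := by
  rw [← norm_toBCF_eq_norm]
  exact x.toBCF.norm_coe_le_norm k

noncomputable def l1Pairing (a : ℕ → ℝ) (ha : Summable fun k => |a k|) : C₀(ℕ, ℝ) →L[ℝ] ℝ :=
  LinearMap.mkContinuous
    { toFun := fun x => ∑' k, a k * x k
      map_add' := fun x y => by
        simp only [ZeroAtInftyContinuousMap.add_apply, mul_add]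
        exact (ha.mul_of_tendsto x.tendsto_atTop_nat).tsum_add
          (ha.mul_of_tendsto y.tendsto_atTop_nat)
      map_smul' := fun c x => by
        simp only [ZeroAtInftyContinuousMap.smul_apply, smul_eq_mul, RingHom.id_apply,
          ← tsum_mul_left, mul_left_comm] }
    (∑' k, |a k|) fun x => by
      refine tsum_of_norm_bounded (ha.hasSum.mul_right ‖x‖) fun k => ?_
      rw [Real.norm_eq_abs, abs_mul]
      exact mul_le_mul_of_nonneg_left (x.abs_apply_le_norm k) (abs_nonneg _)

theorem l1Pairing_apply (a : ℕ → ℝ) (ha : Summable fun k => |a k|) (x : C₀(ℕ, ℝ)) :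
    l1Pairing a ha x = ∑' k, a k * x k := rfl

noncomputable def truncatedSign (a : ℕ → ℝ) (K : ℕ) : C₀(ℕ, ℝ) :=
  ⟨⟨fun k => if k < K then (SignType.sign (a k) : ℝ) else 0, continuous_of_discreteTopology⟩, by
    rw [cocompact_eq_atTop]
    exact tendsto_const_nhds.congr' <|
      (eventually_ge_atTop K).mono fun k hk => (if_neg (not_lt.2 hk)).symm⟩

theorem sum_range_abs_le_norm_l1Pairing (a : ℕ → ℝ) (ha : Summable fun k => |a k|) (K : ℕ) :
    ∑ k ∈ range K, |a k| ≤ ‖l1Pairing a ha‖ := by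
  have hnorm : ‖truncatedSign a K‖ ≤ 1 := by
    rw [← ZeroAtInftyContinuousMap.norm_toBCF_eq_norm]
    refine (BoundedContinuousFunction.norm_le zero_le_one).2 fun k => ?_
    show ‖(if k < K then (SignType.sign (a k) : ℝ) else 0)‖ ≤ 1
    split_ifs
    · rcases SignType.sign (a k) with _ | _ | _ <;> simp
    · simp
  have hval : l1Pairing a ha (truncatedSign a K) = ∑ k ∈ range K, |a k| := by
    rw [l1Pairing_apply, ← tsum_ite_lt]
    refine tsum_congr fun k => ?_
    show a k * (if k < K then (SignType.sign (a k) : ℝ) else 0) = _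
    split_ifs
    · exact self_mul_sign (a k)
    · exact mul_zero _
  calc ∑ k ∈ range K, |a k| = l1Pairing a ha (truncatedSign a K) := hval.symm
    _ ≤ ‖l1Pairing a ha‖ * ‖truncatedSign a K‖ :=
        (le_abs_self _).trans ((l1Pairing a ha).le_opNorm _)
    _ ≤ ‖l1Pairing a ha‖ := mul_le_of_le_one_right (by positivity) hnorm

theorem exists_tsum_abs_le_of_bddAbove {ι : Type*} (a : ι → ℕ → ℝ)
    (ha : ∀ i, Summable fun k => |a i k|)
    (h : ∀ x : ℕ → ℝ, Tendsto x atTop (𝓝 0) →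
      BddAbove (Set.range fun i => |∑' k, a i k * x k|)) :
    ∃ C, ∀ i, ∑' k, |a i k| ≤ C := by
  obtain ⟨C, hC⟩ := banach_steinhaus (g := fun i => l1Pairing (a i) (ha i)) fun x => by
    obtain ⟨C, hC⟩ := h x x.tendsto_atTop_nat
    exact ⟨C, Set.forall_mem_range.1 hC⟩
  exact ⟨C, fun i => Real.tsum_le_of_sum_range_le (fun _ => abs_nonneg _)
    fun K => (sum_range_abs_le_norm_l1Pairing (a i) (ha i) K).trans (hC i)⟩

theorem summable_abs_of_forall_summable_mul {a : ℕ → ℝ}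
    (h : ∀ x : ℕ → ℝ, Tendsto x atTop (𝓝 0) → Summable fun k => a k * x k) :
    Summable fun k => |a k| := by
  have htrunc : ∀ K, Summable fun k => |if k < K then a k else 0| := fun K =>
    summable_of_ne_finset_zero (s := range K) fun k hk => by simp_all
  obtain ⟨C, hC⟩ := exists_tsum_abs_le_of_bddAbove _ htrunc fun x hx => by
    simpa only [ite_mul, zero_mul, tsum_ite_lt] using
      (h x hx).hasSum.tendsto_sum_nat.abs.bddAbove_range
  refine summable_of_sum_range_le (c := C) (fun _ => abs_nonneg _) fun K => ?_
  simpa only [apply_ite, abs_zero, tsum_ite_lt] using hC K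

theorem summable_abs_and_tsum_le_of_tendsto {ι : Type*} {l : Filter ι} [l.NeBot]
    {a : ι → ℕ → ℝ} {α : ℕ → ℝ} {C : ℝ} (ha : ∀ i, Summable fun k => |a i k|)
    (hC : ∀ i, ∑' k, |a i k| ≤ C) (hα : ∀ k, Tendsto (a · k) l (𝓝 (α k))) :
    (Summable fun k => |α k|) ∧ ∑' k, |α k| ≤ C := by
  have hpartial : ∀ K, ∑ k ∈ range K, |α k| ≤ C := fun K =>
    le_of_tendsto' (tendsto_finsetSum _ fun k _ => (hα k).abs) fun i =>
      ((ha i).sum_le_tsum _ fun k _ => abs_nonneg _).trans (hC i)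
  exact ⟨summable_of_sum_range_le (fun _ => abs_nonneg _) hpartial,
    Real.tsum_le_of_sum_range_le (fun _ => abs_nonneg _) hpartial⟩

theorem tendstoUniformly_sum_range_mul {ι : Type*} {a : ι → ℕ → ℝ} {C : ℝ}
    (ha : ∀ i, Summable fun k => |a i k|) (hC : ∀ i, ∑' k, |a i k| ≤ C) {y : ℕ → ℝ}
    (hy : Tendsto y atTop (𝓝 0)) :
    TendstoUniformly (fun K i => ∑ k ∈ range K, a i k * y k) (fun i => ∑' k, a i k * y k)
      atTop := by
  rw [Metric.tendstoUniformly_iff]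
  intro ε hε
  have hδ : 0 < ε / (|C| + 1) := by positivity
  obtain ⟨K, hK⟩ := (Metric.tendsto_atTop.1 hy) _ hδ
  filter_upwards [eventually_ge_atTop K] with K' hK' i
  have htail := abs_tsum_mul_sub_sum_range_le (ha i) (y := y) (K := K') (δ := ε / (|C| + 1))
    fun k hk => by simpa using (hK k (hK'.trans hk)).le
  rw [Real.dist_eq]
  calc _ ≤ (∑' k, |a i k|) * (ε / (|C| + 1)) := htail
    _ ≤ |C| * (ε / (|C| + 1)) := by gcongr; exact (hC i).trans (le_abs_self C)
    _ < ε := by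
      rw [mul_div_assoc', div_lt_iff₀ (by positivity)]
      nlinarith [abs_nonneg C]

theorem tendsto_tsum_mul_of_tendsto_zero {ι : Type*} {l : Filter ι} [l.NeBot]
    {a : ι → ℕ → ℝ} {α : ℕ → ℝ} {C : ℝ} (ha : ∀ i, Summable fun k => |a i k|)
    (hC : ∀ i, ∑' k, |a i k| ≤ C) (hα : ∀ k, Tendsto (a · k) l (𝓝 (α k))) {y : ℕ → ℝ}
    (hy : Tendsto y atTop (𝓝 0)) :
    Tendsto (fun i => ∑' k, a i k * y k) l (𝓝 (∑' k, α k * y k)) := by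
  have hαy : Summable fun k => α k * y k :=
    (summable_abs_and_tsum_le_of_tendsto ha hC hα).1.mul_of_tendsto hy
  exact (tendstoUniformly_sum_range_mul ha hC hy).tendsto_of_eventually_tendsto
    (Eventually.of_forall fun K => tendsto_finsetSum _ fun k _ => (hα k).mul_const _)
    hαy.hasSum.tendsto_sum_nat

/-- Kojima–Schur: a matrix maps `c` into `c` iff the columns converge, the rows
have uniformly bounded `ℓ₁`-norms, and the row sums converge. -/
theorem matrix_c_to_c (A : ℕ → ℕ → ℝ) :
    (∀ x : ℕ → ℝ, (∃ l, Tendsto x atTop (𝓝 l)) →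
      (∀ n, Summable (fun k => A n k * x k)) ∧
      ∃ L, Tendsto (fun n => ∑' k, A n k * x k) atTop (𝓝 L)) ↔
    ((∀ k, ∃ l, Tendsto (fun n => A n k) atTop (𝓝 l)) ∧
      (∃ C : ℝ, ∀ n, (Summable fun k => |A n k|) ∧ ∑' k, |A n k| ≤ C) ∧
      ∃ L, Tendsto (fun n => ∑' k, A n k) atTop (𝓝 L)) := by
  constructor
  · intro h
    have hrow : ∀ n, Summable fun k => |A n k| := fun n =>
      summable_abs_of_forall_summable_mul fun x hx => (h x ⟨0, hx⟩).1 n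
    obtain ⟨C, hC⟩ := exists_tsum_abs_le_of_bddAbove A hrow fun x hx =>
      let ⟨_, hL⟩ := (h x ⟨0, hx⟩).2
      hL.abs.bddAbove_range
    refine ⟨fun k => ?_, ⟨C, fun n => ⟨hrow n, hC n⟩⟩, ?_⟩
    · have hunit : Tendsto (Pi.single k 1 : ℕ → ℝ) atTop (𝓝 0) :=
        tendsto_const_nhds.congr' <| (eventually_gt_atTop k).mono fun j hj => by simp [hj.ne']
      simpa [Pi.single_apply] using (h _ ⟨0, hunit⟩).2
    · simpa using (h (fun _ => 1) ⟨1, tendsto_const_nhds⟩).2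
  · rintro ⟨hcol, ⟨C, hC⟩, s, hs⟩ x ⟨l, hl⟩
    choose α hα using hcol
    have hrow : ∀ n, Summable fun k => |A n k| := fun n => (hC n).1
    refine ⟨fun n => (hrow n).mul_of_tendsto hl, ?_⟩
    have hy : Tendsto (fun k => x k - l) atTop (𝓝 0) := by simpa using hl.sub_const l
    refine ⟨_, ((tendsto_tsum_mul_of_tendsto_zero hrow (fun n => (hC n).2) hα hy).add
      (hs.mul_const l)).congr fun n => ?_⟩
    rw [← tsum_mul_right, ← ((hrow n).mul_of_tendsto hy).tsum_add ((hrow n).of_abs.mul_right l)]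
    exact tsum_congr fun k => by ring
end

section
/- Let α be a proper fraction, u a sequence of nonzero scalars, μ ∈ {c₀, c}, λ any sequence space, and A = (a_{nk}) an infinite matrix. Define B = (b_{nk}) by b_{nk} = Σ_{j=0}^{n} (Σ_{i=0}^{n-j} (-1)^i [Γ(α+1)/(i!·Γ(α+1-i))] u_{i+j}) a_{jk}. Then A maps λ into μ(Γ, Δ^{(α)}, u) if and only if B maps λ into μ. -/
/-! The hypothesis on `B` says `B = T A` for the lower triangular matrix `T = Δ_u^{(α)}(Γ)`,
and exchanging the finite sum over `j ≤ n` with the series gives `(B z)_n = (T (A z))_n`, the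
`Δ_u^{(α)}(Γ)`-transform of `A z`, as soon as the rows of `A` are summable against `z`. The
diagonal of `T` is `u_n ≠ 0`, since the zeroth fractional coefficient is `1`; so forward
substitution recovers the rows of `A` from those of `B`, and summability passes back from `B`
to `A` as well. -/

open Finset Filter Topology

section Triangle

variable {R : Type*} [TopologicalSpace R] (T A : ℕ → ℕ → R) (z : ℕ → R)

theorem summable_triangle_mul_row [Semiring R] [IsTopologicalSemiring R]
    (hA : ∀ n, Summable fun k => A n k * z k) (n : ℕ) :
    Summable fun k => (∑ j ∈ range (n + 1), T n j * A j k) * z k := by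
  simp only [sum_mul, mul_assoc]
  exact summable_sum fun j _ => (hA j).mul_left _

theorem tsum_triangle_mul_row [Semiring R] [IsTopologicalSemiring R] [T2Space R]
    (hA : ∀ n, Summable fun k => A n k * z k) (n : ℕ) :
    ∑' k, (∑ j ∈ range (n + 1), T n j * A j k) * z k =
      ∑ j ∈ range (n + 1), T n j * ∑' k, A j k * z k := by
  simp only [sum_mul, mul_assoc]
  rw [Summable.tsum_finsetSum fun j _ => (hA j).mul_left _]
  exact sum_congr rfl fun j _ => (hA j).tsum_mul_left _

theorem summable_rows_of_summable_triangle_mul_rows [DivisionRing R] [IsTopologicalRing R]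
    (hT : ∀ n, T n n ≠ 0)
    (hB : ∀ n, Summable fun k => (∑ j ∈ range (n + 1), T n j * A j k) * z k) (n : ℕ) :
    Summable fun k => A n k * z k := by
  induction n using Nat.strong_induction_on with
  | _ n ih =>
    have hrow : (fun k => A n k * z k) = fun k => (T n n)⁻¹ * ((∑ j ∈ range (n + 1),
        T n j * A j k) * z k - ∑ j ∈ range n, T n j * (A j k * z k)) := by
      funext k
      rw [sum_range_succ, add_mul, sum_mul]
      simp only [mul_assoc, add_sub_cancel_left, inv_mul_cancel_left₀ (hT n)]
    rw [hrow]
    exact ((hB n).sub (summable_sum fun j hj => (ih j (mem_range.mp hj)).mul_left _)).mul_left _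

theorem summable_rows_iff_summable_triangle_mul_rows [DivisionRing R] [IsTopologicalRing R]
    (hT : ∀ n, T n n ≠ 0) :
    (∀ n, Summable fun k => A n k * z k) ↔
      ∀ n, Summable fun k => (∑ j ∈ range (n + 1), T n j * A j k) * z k :=
  ⟨summable_triangle_mul_row T A z, summable_rows_of_summable_triangle_mul_rows T A z hT⟩

end Triangle

/-- Entry `(n, j)`, `j ≤ n`, of the triangle `Δ_u^{(α)}(Γ)`. -/
noncomputable def gammaTriangle (α : ℝ) (u : ℕ → ℝ) (n j : ℕ) : ℝ :=
  ∑ i ∈ range (n - j + 1), fracCoeff α i * u (i + j)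

theorem fracCoeff_zero {α : ℝ} (hα : -1 < α) : fracCoeff α 0 = 1 := by
  have hΓ : Real.Gamma (α + 1) ≠ 0 := (Real.Gamma_pos_of_pos (by linarith)).ne'
  simp [fracCoeff, hΓ]

theorem gammaTriangle_self {α : ℝ} (hα : -1 < α) (u : ℕ → ℝ) (n : ℕ) :
    gammaTriangle α u n n = u n := by
  simp [gammaTriangle, fracCoeff_zero hα]

theorem fracDiff_eq_sum (α : ℝ) (x : ℕ → ℝ) (j : ℕ) :
    fracDiff α x j = ∑ m ∈ range (j + 1), fracCoeff α (j - m) * x m := by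
  rw [fracDiff, ← sum_range_reflect]
  refine sum_congr rfl fun m hm => ?_
  rw [Nat.add_sub_cancel, Nat.sub_sub_self (Nat.lt_succ_iff.mp (mem_range.mp hm))]

theorem gammaTransform_eq_gammaTriangle_mul (α : ℝ) (u x : ℕ → ℝ) :
    gammaTransform α u x = fun n => ∑ j ∈ range (n + 1), gammaTriangle α u n j * x j := by
  funext n
  simp only [gammaTransform, fracDiff_eq_sum, mul_sum, range_eq_Ico]
  rw [← sum_Ico_Ico_comm]
  refine sum_congr rfl fun j hj => ?_
  have hjn : j ≤ n := Nat.lt_succ_iff.mp (mem_Ico.mp hj).2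
  rw [gammaTriangle, sum_Ico_eq_sum_range, sum_mul, Nat.sub_add_comm hjn, range_eq_Ico]
  refine sum_congr rfl fun i _ => ?_
  rw [Nat.add_sub_cancel_left, add_comm j i]
  ring

theorem matrix_into_gamma_space_general (α : ℝ) (hα : 0 < α)
    (u : ℕ → ℝ) (hu : ∀ k, u k ≠ 0)
    (μ : Set (ℕ → ℝ))
    (Λ : Set (ℕ → ℝ))
    (A B : ℕ → ℕ → ℝ)
    (hB : ∀ n k, B n k = ∑ j ∈ Finset.range (n + 1),
      (∑ i ∈ Finset.range (n - j + 1), fracCoeff α i * u (i + j)) * A j k) :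
    (∀ z ∈ Λ, (∀ n, Summable fun k => A n k * z k) ∧
      gammaTransform α u (fun n => ∑' k, A n k * z k) ∈ μ) ↔
    (∀ z ∈ Λ, (∀ n, Summable fun k => B n k * z k) ∧
      (fun n => ∑' k, B n k * z k) ∈ μ) := by
  obtain rfl : B = fun n k => ∑ j ∈ range (n + 1), gammaTriangle α u n j * A j k :=
    funext₂ hB
  have hdiag : ∀ n, gammaTriangle α u n n ≠ 0 := fun n =>
    gammaTriangle_self (by linarith) u n ▸ hu n
  refine forall₂_congr fun z _ => ?_
  rw [← summable_rows_iff_summable_triangle_mul_rows _ A z hdiag]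
  refine and_congr_right fun hA => ?_
  rw [gammaTransform_eq_gammaTriangle_mul]
  simp only [tsum_triangle_mul_row _ A z hA]

theorem matrix_into_gamma_space (α : ℝ) (hα : 0 < α) (hα1 : α < 1)
    (u : ℕ → ℝ) (hu : ∀ k, u k ≠ 0)
    (μ : Set (ℕ → ℝ))
    (hμ : μ = {y | Tendsto y atTop (𝓝 0)} ∨ μ = {y | ∃ L, Tendsto y atTop (𝓝 L)})
    (Λ : Set (ℕ → ℝ))
    (A B : ℕ → ℕ → ℝ)
    (hB : ∀ n k, B n k = ∑ j ∈ Finset.range (n + 1),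
      (∑ i ∈ Finset.range (n - j + 1), fracCoeff α i * u (i + j)) * A j k) :
    (∀ z ∈ Λ, (∀ n, Summable fun k => A n k * z k) ∧
      gammaTransform α u (fun n => ∑' k, A n k * z k) ∈ μ) ↔
    (∀ z ∈ Λ, (∀ n, Summable fun k => B n k * z k) ∧
      (fun n => ∑' k, B n k * z k) ∈ μ) :=
  matrix_into_gamma_space_general α hα u hu μ Λ A B hB
end
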